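/- arXiv:2605.26921 — 2 statements merged into one kernel-verified Lean document; each statement's English description precedes it below -/
import Mathlib

section
/- Let S = WW^T where W is an n×r real matrix of rank r. Fix an index set I ⊆ {1,…,n} with |I| = r, and let S_I = S[I,I] be the principal submatrix of S on I. If S_I is invertible, then for every p, q ∈ {1,…,n}, S_{pq} = S_{p,I} S_I^{-1} S_{I,q}, where S_{p,I} is the row of S at index p restricted to columns in I, and S_{I,q} is the column of S at index q restricted to rows in I. -/
open Matrix

/-- Nyström completion formula: if `S = W * Wᵀ` with `W` of full column rank `r`,
`I` a size-`r` index set (injective map `Fin r → Fin n`), and the principal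
submatrix `S_I` is invertible, then every entry `S p q` equals
`S_{p,I} · S_I⁻¹ · S_{I,q}`. -/
theorem nystrom_completion {n r : ℕ} (W : Matrix (Fin n) (Fin r) ℝ)
    (hW : W.rank = r) (I : Fin r → Fin n) (hI : Function.Injective I)
    (hinv : IsUnit ((W * Wᵀ).submatrix I I).det) :
    ∀ p q : Fin n,
      (W * Wᵀ) p q =
        (fun j => (W * Wᵀ) p (I j)) ⬝ᵥ
          (((W * Wᵀ).submatrix I I)⁻¹ *ᵥ (fun j => (W * Wᵀ) (I j) q)) := by
  intro p q
  set A : Matrix (Fin r) (Fin r) ℝ := W.submatrix I id with hA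
  have hsub : (W * Wᵀ).submatrix I I = A * Aᵀ := by
    ext i j
    simp [hA, mul_apply, Matrix.submatrix]
  have hAdet : IsUnit A.det := by
    rw [hsub, det_mul, det_transpose] at hinv
    exact isUnit_of_mul_isUnit_left hinv
  have hATdet : IsUnit Aᵀ.det := by rwa [det_transpose]
  have hrow : (fun j => (W * Wᵀ) p (I j)) = (W p) ᵥ* Aᵀ := by
    ext j
    simp [hA, mul_apply, vecMul, dotProduct]
  have hcol : (fun j => (W * Wᵀ) (I j) q) = A *ᵥ (fun k => W q k) := by
    ext j
    simp [hA, mul_apply, mulVec, dotProduct]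
  haveI := A.invertibleOfIsUnitDet hAdet
  haveI := Aᵀ.invertibleOfIsUnitDet hATdet
  rw [hsub, hrow, hcol, Matrix.mul_inv_rev, Matrix.mulVec_mulVec, mul_assoc,
    Matrix.inv_mul_of_invertible A, mul_one, ← Matrix.dotProduct_mulVec,
    Matrix.mulVec_mulVec, Matrix.mul_inv_of_invertible Aᵀ, Matrix.one_mulVec]
  simp [mul_apply, dotProduct]
end

section
/- For any W ∈ ℝ^{n×r} of rank r with r ≤ n, the rank of the linear map V ↦ VW^T + WV^T from ℝ^{n×r} to symmetric n×n matrices equals nr − r(r−1)/2, and its kernel is exactly {WA : A ∈ ℝ^{r×r}, A^T = −A}, which has dimension r(r−1)/2. -/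
/-!
Full column rank gives a left inverse `L` of `W`. If `V Wᵀ + W Vᵀ = 0`, multiplying on the right
by `Lᵀ` gives `V = W A` with `A = -(L V)ᵀ`, and then `L V = A` forces `Aᵀ = -A`; conversely `W A`
lies in the kernel for every skew-symmetric `A`. As `A ↦ W A` is injective, the kernel is
isomorphic to the skew-symmetric `r × r` matrices, which are parametrised by their entries above
the diagonal, so it has dimension `r.choose 2`; rank–nullity gives the rank.
-/

open Matrix

/-- The differential of `φ(W) = W * Wᵀ` at `W`: the linear map
`V ↦ V * Wᵀ + W * Vᵀ`. -/
def dphi (n r : ℕ) (W : Matrix (Fin n) (Fin r) ℝ) :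
    Matrix (Fin n) (Fin r) ℝ →ₗ[ℝ] Matrix (Fin n) (Fin n) ℝ where
  toFun V := V * Wᵀ + W * Vᵀ
  map_add' x y := by
    simp only [Matrix.add_mul, Matrix.mul_add, Matrix.transpose_add]
    abel
  map_smul' c x := by
    simp only [Matrix.smul_mul, Matrix.mul_smul, Matrix.transpose_smul,
      smul_add, RingHom.id_apply]

namespace Matrix

section

variable {R : Type*} [CommRing R] {l m n : Type*} [Fintype m] [Fintype n] [DecidableEq n]

theorem mul_left_injective_of_mul_eq_one {W : Matrix m n R} {L : Matrix n m R} (hL : L * W = 1) :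
    Function.Injective (W * · : Matrix n l R → Matrix m l R) := fun A B h => by
  simpa [← Matrix.mul_assoc, hL] using congrArg (L * ·) h

theorem mul_transpose_add_mul_transpose_eq_zero_iff {W : Matrix m n R} {L : Matrix n m R}
    (hL : L * W = 1) (V : Matrix m n R) :
    V * Wᵀ + W * Vᵀ = 0 ↔ ∃ A : Matrix n n R, Aᵀ = -A ∧ V = W * A := by
  constructor
  · intro h
    have hV : V = W * -(L * V)ᵀ := by
      have := congrArg (· * Lᵀ) h
      simp only [Matrix.add_mul, Matrix.mul_assoc, ← transpose_mul, hL, transpose_one,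
        Matrix.mul_one, Matrix.zero_mul] at this
      rw [Matrix.mul_neg, ← eq_neg_iff_add_eq_zero.mpr this]
    refine ⟨-(L * V)ᵀ, ?_, hV⟩
    have hLV : L * V = -(L * V)ᵀ := by
      conv_lhs => rw [hV, ← Matrix.mul_assoc, hL, Matrix.one_mul]
    rw [transpose_neg, transpose_transpose, ← hLV]
  · rintro ⟨A, hA, rfl⟩
    rw [transpose_mul, hA, Matrix.neg_mul, Matrix.mul_neg, Matrix.mul_assoc, add_neg_cancel]

theorem exists_mul_eq_one_of_rank_eq_card {K : Type*} [Field K]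
    (W : Matrix m n K) (hW : W.rank = Fintype.card n) : ∃ L : Matrix n m K, L * W = 1 := by
  classical
  have hker : LinearMap.ker W.mulVecLin = ⊥ := by
    have := LinearMap.finrank_range_add_finrank_ker W.mulVecLin
    rw [← Matrix.rank, hW, Module.finrank_fintype_fun_eq_card] at this
    exact Submodule.finrank_eq_zero.mp (by omega)
  obtain ⟨g, hg⟩ := W.mulVecLin.exists_leftInverse_of_injective hker
  refine ⟨LinearMap.toMatrix' g, ?_⟩
  rw [← LinearMap.toMatrix'_toLin' W, ← LinearMap.toMatrix'_comp, Matrix.toLin'_apply', hg,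
    LinearMap.toMatrix'_id]

end

variable {R : Type*} [CommRing R] {n : Type*} [Fintype n]

theorem mem_skewAdjointMatricesSubmodule_one [DecidableEq n] {A : Matrix n n R} :
    A ∈ skewAdjointMatricesSubmodule (1 : Matrix n n R) ↔ Aᵀ = -A := by
  simp [Matrix.IsSkewAdjoint, Matrix.IsAdjointPair]

variable [LinearOrder n]

noncomputable def skewAdjointMatricesSubmoduleOneEquiv [IsAddTorsionFree R] :
    skewAdjointMatricesSubmodule (1 : Matrix n n R) ≃ₗ[R] ({p : n × n // p.1 < p.2} → R) :=
  LinearEquiv.ofBijective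
    { toFun A p := A.1 p.1.1 p.1.2
      map_add' _ _ := rfl
      map_smul' _ _ := rfl } <| by
    refine ⟨(injective_iff_map_eq_zero _).mpr fun ⟨A, hA⟩ h => ?_, fun f => ?_⟩
    · have hA : ∀ i j, A i j = -A j i := fun i j =>
        congrFun₂ (mem_skewAdjointMatricesSubmodule_one.mp hA) j i
      ext i j
      change A i j = 0
      rcases lt_trichotomy i j with hij | rfl | hij
      · exact congrFun h ⟨(i, j), hij⟩
      · exact self_eq_neg.mp (hA i i)
      · rw [hA, neg_eq_zero]
        exact congrFun h ⟨(j, i), hij⟩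
    · let A : Matrix n n R := of fun i j =>
        if h : i < j then f ⟨(i, j), h⟩ else if h : j < i then -f ⟨(j, i), h⟩ else 0
      have hA : Aᵀ = -A := by
        ext i j
        rcases lt_trichotomy i j with hij | rfl | hij
        · simp [A, hij, hij.not_gt]
        · simp [A]
        · simp [A, hij, hij.not_gt]
      exact ⟨⟨A, mem_skewAdjointMatricesSubmodule_one.mpr hA⟩, funext fun p => dif_pos p.2⟩

theorem finrank_skewAdjointMatricesSubmodule_one [StrongRankCondition R] [IsAddTorsionFree R] :
    Module.finrank R (skewAdjointMatricesSubmodule (1 : Matrix n n R)) =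
      (Fintype.card n).choose 2 := by
  rw [skewAdjointMatricesSubmoduleOneEquiv.finrank_eq, Module.finrank_fintype_fun_eq_card,
    Fintype.card_subtype, Fintype.card_product_filter_lt]

end Matrix

theorem ker_dphi_eq_map_mulLeft {n r : ℕ} {W : Matrix (Fin n) (Fin r) ℝ}
    {L : Matrix (Fin r) (Fin n) ℝ} (hL : L * W = 1) :
    LinearMap.ker (dphi n r W) =
      (skewAdjointMatricesSubmodule 1).map (mulLeftLinearMap (Fin r) ℝ W) := by
  ext V
  simp only [LinearMap.mem_ker, Submodule.mem_map, mem_skewAdjointMatricesSubmodule_one,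
    mulLeftLinearMap_apply, eq_comm (b := V)]
  exact mul_transpose_add_mul_transpose_eq_zero_iff hL V

theorem finrank_ker_dphi {n r : ℕ} {W : Matrix (Fin n) (Fin r) ℝ}
    {L : Matrix (Fin r) (Fin n) ℝ} (hL : L * W = 1) :
    Module.finrank ℝ (LinearMap.ker (dphi n r W)) = r * (r - 1) / 2 := by
  rw [ker_dphi_eq_map_mulLeft hL, ← (Submodule.equivMapOfInjective _
      (mul_left_injective_of_mul_eq_one hL) _).finrank_eq,
    finrank_skewAdjointMatricesSubmodule_one, Fintype.card_fin, Nat.choose_two_right]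

theorem dphi_rank_and_kernel_general {n r : ℕ}
    (W : Matrix (Fin n) (Fin r) ℝ) (hW : W.rank = r) :
    Module.finrank ℝ (LinearMap.range (dphi n r W)) = n * r - r * (r - 1) / 2 ∧
      (LinearMap.ker (dphi n r W) : Set (Matrix (Fin n) (Fin r) ℝ)) =
        {V | ∃ A : Matrix (Fin r) (Fin r) ℝ, Aᵀ = -A ∧ V = W * A} ∧
      Module.finrank ℝ (LinearMap.ker (dphi n r W)) = r * (r - 1) / 2 := by
  obtain ⟨L, hL⟩ := W.exists_mul_eq_one_of_rank_eq_card (by rw [hW, Fintype.card_fin])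
  refine ⟨?_, ?_, finrank_ker_dphi hL⟩
  · have := (dphi n r W).finrank_range_add_finrank_ker
    rw [finrank_ker_dphi hL, Module.finrank_matrix, Module.finrank_self, Fintype.card_fin,
      Fintype.card_fin] at this
    omega
  · ext V
    exact mul_transpose_add_mul_transpose_eq_zero_iff hL V

/-- For `W` of full column rank `r ≤ n`, the rank of `V ↦ V Wᵀ + W Vᵀ` equals
`nr − r(r−1)/2`, and its kernel is exactly `{W A : Aᵀ = −A}`, of dimension
`r(r−1)/2`. -/
theorem dphi_rank_and_kernel {n r : ℕ} (hrn : r ≤ n)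
    (W : Matrix (Fin n) (Fin r) ℝ) (hW : W.rank = r) :
    Module.finrank ℝ (LinearMap.range (dphi n r W)) = n * r - r * (r - 1) / 2 ∧
      (LinearMap.ker (dphi n r W) : Set (Matrix (Fin n) (Fin r) ℝ)) =
        {V | ∃ A : Matrix (Fin r) (Fin r) ℝ, Aᵀ = -A ∧ V = W * A} ∧
      Module.finrank ℝ (LinearMap.ker (dphi n r W)) = r * (r - 1) / 2 :=
  dphi_rank_and_kernel_general W hW
end
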